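/- For all integers p, c ≥ 1 there exist matrices W_Q, W_K ∈ ℝ^{(2p+2)×(2p+1)} and W_V ∈ ℝ^{(2p+2)×1}, depending only on p and c (not on F or A), such that for every 3-SAT formula F over p variables with clauses C_1, …, C_c and every partial assignment A, the saturated causal attention output at the last position satisfies SaturatedAttn(X_encoding)_{c+2} = 1 if A ⊨ F (every clause C_i contains a literal of A) and = 0 otherwise. -/

import Mathlib

open Finset Matrix

abbrev Lit (p : ℕ) := Fin p × Bool

def negLit {p : ℕ} (l : Lit p) : Lit p := (l.1, !l.2)

def Consistent {p : ℕ} (B : Finset (Lit p)) : Prop := ∀ l ∈ B, negLit l ∉ B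

/-- The encoding `E(B) ∈ ℝ^{2p}`. -/
def enc {p : ℕ} (B : Finset (Lit p)) : Fin p ⊕ Fin p → ℝ
  | Sum.inl v => if (v, true) ∈ B then 1 else 0
  | Sum.inr v => if (v, false) ∈ B then 1 else 0

/-- The input matrix `X_encoding ∈ ℝ^{(c+2)×(2p+2)}`: first row `(0_{2p}, 1, 1)`,
rows `2, …, c+1` are `(E(Cᵢ), 0, 1)`, last row is `(E(A), 0, 1)`. -/
def Xenc {p c : ℕ} (C : Fin c → Finset (Lit p)) (A : Finset (Lit p)) :
    Matrix (Fin (c + 2)) ((Fin p ⊕ Fin p) ⊕ Fin 2) ℝ :=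
  fun i j =>
    if h0 : (i : ℕ) = 0 then Sum.elim (fun _ => (0 : ℝ)) (fun _ => (1 : ℝ)) j
    else if h1 : (i : ℕ) ≤ c then
      Sum.elim (enc (C ⟨(i : ℕ) - 1, by omega⟩))
        (fun k => if k = 0 then (0 : ℝ) else 1) j
    else Sum.elim (enc A) (fun k => if k = 0 then (0 : ℝ) else 1) j

open Classical in
/-- Saturated causal attention: at position `i`, average the value vectors over the
positions `j ≤ i` attaining the maximal attention score. -/
noncomputable def satAttn {n : ℕ} {d dh dv : Type*} [Fintype d] [Fintype dh] [Fintype dv]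
    (WQ WK : Matrix d dh ℝ) (WV : Matrix d dv ℝ)
    (X : Matrix (Fin n) d ℝ) (i : Fin n) : dv → ℝ :=
  let A : Matrix (Fin n) (Fin n) ℝ := (X * WQ) * (X * WK)ᵀ
  let Mi : Finset (Fin n) :=
    Finset.univ.filter (fun j => j ≤ i ∧
      A i j = (Finset.univ.filter (fun k => k ≤ i)).sup'
        ⟨i, by simp⟩ (fun k => A i k))
  fun v => (∑ j ∈ Mi, (X * WV) j v) / (Mi.card : ℝ)

def eIdx {p : ℕ} : (Fin p ⊕ Fin p) → Fin (2 * p + 1)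
  | Sum.inl v => ⟨v.1, by have := v.2; omega⟩
  | Sum.inr v => ⟨p + v.1, by have := v.2; omega⟩

lemma eIdx_inj {p : ℕ} : Function.Injective (eIdx (p := p)) := by
  rintro (u | u) (v | v) h <;> simp only [eIdx, Fin.mk.injEq] at h
  · exact congrArg Sum.inl (Fin.ext h)
  · exact absurd h (by have := u.2; omega)
  · exact absurd h (by have := v.2; omega)
  · exact congrArg Sum.inr (Fin.ext (by omega))

lemma eIdx_ne_last {p : ℕ} (u : Fin p ⊕ Fin p) : eIdx u ≠ ⟨2 * p, by omega⟩ := by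
  rcases u with v | v <;> simp only [eIdx, ne_eq, Fin.mk.injEq] <;> have := v.2 <;> omega

def litEquiv (p : ℕ) : (Fin p ⊕ Fin p) ≃ Lit p where
  toFun := Sum.elim (fun v => (v, true)) (fun v => (v, false))
  invFun l := if l.2 then .inl l.1 else .inr l.1
  left_inv := by rintro (v | v) <;> simp
  right_inv := by rintro ⟨v, (_ | _)⟩ <;> simp

lemma enc_dot {p : ℕ} (A B : Finset (Lit p)) :
    ∑ u, enc A u * enc B u = ((A ∩ B).card : ℝ) := by
  have h1 : ∀ u, enc A u * enc B u = if litEquiv p u ∈ A ∩ B then (1 : ℝ) else 0 := by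
    rintro (v | v) <;> simp only [enc, litEquiv, Equiv.coe_fn_mk, Sum.elim_inl, Sum.elim_inr,
      Finset.mem_inter] <;> split_ifs <;> simp_all
  simp only [h1]
  rw [Equiv.sum_comp (litEquiv p) (fun l => if l ∈ A ∩ B then (1 : ℝ) else 0)]
  have h2 : (A ∩ B).card = (Finset.univ.filter (fun l : Lit p => l ∈ A ∩ B)).card := by
    congr 1; ext l; simp
  rw [h2, Finset.card_filter]
  push_cast
  rfl

noncomputable def WQm (p : ℕ) : Matrix ((Fin p ⊕ Fin p) ⊕ Fin 2) (Fin (2 * p + 1)) ℝ :=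
  fun d h => match d with
  | .inl u => if h = eIdx u then -1 else 0
  | .inr k => if k = 1 ∧ h = ⟨2 * p, by omega⟩ then 1 else 0

noncomputable def WKm (p : ℕ) : Matrix ((Fin p ⊕ Fin p) ⊕ Fin 2) (Fin (2 * p + 1)) ℝ :=
  fun d h => match d with
  | .inl u => if h = eIdx u then 1 else 0
  | .inr k => if k = 0 ∧ h = ⟨2 * p, by omega⟩ then -(1/2) else 0

noncomputable def WVm (p : ℕ) : Matrix ((Fin p ⊕ Fin p) ⊕ Fin 2) (Fin 1) ℝ :=
  fun d _ => match d with
  | .inl _ => 0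
  | .inr k => if k = 0 then 1 else 0

noncomputable def Gm (p : ℕ) :
    Matrix ((Fin p ⊕ Fin p) ⊕ Fin 2) ((Fin p ⊕ Fin p) ⊕ Fin 2) ℝ :=
  fun a b => match a, b with
  | .inl u, .inl v => if u = v then -1 else 0
  | .inr k, .inr k' => if k = 1 ∧ k' = 0 then -(1/2) else 0
  | _, _ => 0

lemma gram_eq (p : ℕ) : WQm p * (WKm p)ᵀ = Gm p := by
  ext a b
  rw [Matrix.mul_apply]
  rcases a with u | k <;> rcases b with v | k' <;>
    simp only [WQm, WKm, Gm, transpose_apply, ite_mul, mul_ite, mul_one, mul_zero,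
      zero_mul, one_mul, neg_mul, mul_neg]
  · rw [Finset.sum_ite_eq' Finset.univ (eIdx v)]
    by_cases h : u = v
    · simp [h]
    · simp [h, eIdx_inj.ne_iff.2 h, (eIdx_inj.ne_iff.2 h).symm]
  · apply Finset.sum_eq_zero
    intro x _
    split_ifs <;> simp_all [eIdx_ne_last u]
  · apply Finset.sum_eq_zero
    intro x _
    split_ifs <;> simp_all [eIdx_ne_last v, (eIdx_ne_last v).symm]
  · fin_cases k <;> fin_cases k' <;> simp [Finset.sum_ite_eq']

lemma mulG (p : ℕ) {n : ℕ} (X : Matrix (Fin n) ((Fin p ⊕ Fin p) ⊕ Fin 2) ℝ)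
    (i : Fin n) (b : (Fin p ⊕ Fin p) ⊕ Fin 2) :
    (X * Gm p) i b = Sum.elim (fun v => -X i (.inl v))
      (fun k => if k = 0 then -(1/2) * X i (.inr 1) else 0) b := by
  rw [Matrix.mul_apply, Fintype.sum_sum_type]
  rcases b with v | k
  · simp only [Gm, Sum.elim_inl, mul_ite, mul_neg, mul_one, mul_zero]
    rw [Finset.sum_ite_eq' Finset.univ v]
    simp [Fin.sum_univ_two]
  · simp only [Gm, Sum.elim_inr, mul_ite, mul_zero, Fin.sum_univ_two]
    fin_cases k <;> simp <;> ring

lemma quadform (p : ℕ) {n : ℕ} (X : Matrix (Fin n) ((Fin p ⊕ Fin p) ⊕ Fin 2) ℝ)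
    (i j : Fin n) :
    (X * Gm p * Xᵀ) i j
      = -(∑ u, X i (.inl u) * X j (.inl u)) - (1/2) * (X i (.inr 1) * X j (.inr 0)) := by
  rw [Matrix.mul_apply, Fintype.sum_sum_type]
  simp only [mulG, transpose_apply, Sum.elim_inl, Sum.elim_inr, Fin.sum_univ_two]
  simp [Finset.sum_neg_distrib, neg_mul]
  ring

lemma score_eq (p : ℕ) {n : ℕ} (X : Matrix (Fin n) ((Fin p ⊕ Fin p) ⊕ Fin 2) ℝ) :
    (X * WQm p) * (X * WKm p)ᵀ = X * Gm p * Xᵀ := by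
  rw [Matrix.transpose_mul, ← Matrix.mul_assoc, Matrix.mul_assoc X (WQm p), gram_eq]

section XencLemmas
variable {p c : ℕ} (C : Fin c → Finset (Lit p)) (A : Finset (Lit p))

lemma Xenc_inr_one (j : Fin (c + 2)) : Xenc C A j (.inr 1) = 1 := by
  unfold Xenc; split_ifs <;> simp

lemma Xenc_inr_zero (j : Fin (c + 2)) :
    Xenc C A j (.inr 0) = if (j : ℕ) = 0 then 1 else 0 := by
  unfold Xenc; split_ifs <;> simp_all

lemma Xenc_row0 (u : Fin p ⊕ Fin p) : Xenc C A 0 (.inl u) = 0 := by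
  unfold Xenc; simp

lemma Xenc_clause (j : Fin (c + 2)) (h0 : (j : ℕ) ≠ 0) (h1 : (j : ℕ) ≤ c)
    (u : Fin p ⊕ Fin p) :
    Xenc C A j (.inl u) = enc (C ⟨(j : ℕ) - 1, by omega⟩) u := by
  unfold Xenc; split_ifs <;> simp_all

lemma Xenc_lastrow (j : Fin (c + 2)) (h1 : ¬ (j : ℕ) ≤ c) (u : Fin p ⊕ Fin p) :
    Xenc C A j (.inl u) = enc A u := by
  unfold Xenc; split_ifs <;> simp_all <;> omega

lemma Xenc_val (j : Fin (c + 2)) (v : Fin 1) :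
    (Xenc C A * WVm p) j v = if (j : ℕ) = 0 then 1 else 0 := by
  rw [Matrix.mul_apply, Fintype.sum_sum_type]
  simp only [WVm, Fin.sum_univ_two, mul_zero, mul_ite, mul_one]
  simp [Xenc_inr_zero]

end XencLemmas

noncomputable def Sc {p c : ℕ} (C : Fin c → Finset (Lit p)) (A : Finset (Lit p)) (j : Fin (c + 2)) : ℝ :=
  if _ : (j : ℕ) = 0 then -(1/2)
  else if _ : (j : ℕ) ≤ c then -(((A ∩ C ⟨(j : ℕ) - 1, by omega⟩).card : ℝ))
  else -((A.card : ℝ))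

lemma score_last {p c : ℕ} (C : Fin c → Finset (Lit p)) (A : Finset (Lit p)) (j : Fin (c + 2)) :
    ((Xenc C A * WQm p) * (Xenc C A * WKm p)ᵀ) (Fin.last (c + 1)) j = Sc C A j := by
  rw [score_eq, quadform]
  have hl : ¬((Fin.last (c + 1) : ℕ) ≤ c) := by rw [Fin.val_last]; omega
  by_cases h0 : (j : ℕ) = 0
  · have hj : j = 0 := Fin.ext h0
    subst hj
    simp only [Sc, dif_pos h0]
    simp only [Xenc_lastrow C A _ hl, Xenc_row0, Xenc_inr_one, Xenc_inr_zero, mul_zero,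
      Finset.sum_const_zero, if_pos h0]
    norm_num
  · rw [Sc, dif_neg h0]
    by_cases h1 : (j : ℕ) ≤ c
    · rw [dif_pos h1]
      simp only [Xenc_lastrow C A _ hl, Xenc_clause C A j h0 h1, Xenc_inr_one,
        Xenc_inr_zero, if_neg h0]
      rw [enc_dot]
      ring
    · rw [dif_neg h1]
      simp only [Xenc_lastrow C A _ hl, Xenc_lastrow C A j h1, Xenc_inr_one,
        Xenc_inr_zero, if_neg h0]
      rw [enc_dot, Finset.inter_self]
      ring

lemma Sc_zero {p c : ℕ} (C : Fin c → Finset (Lit p)) (A : Finset (Lit p)) :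
    Sc C A 0 = -(1/2) := by
  simp [Sc]

lemma Sc_le_zero {p c : ℕ} (C : Fin c → Finset (Lit p)) (A : Finset (Lit p)) (j : Fin (c + 2)) :
    Sc C A j ≤ 0 := by
  unfold Sc; split_ifs <;> simp <;> positivity

open Classical in
theorem stmt8 (p c : ℕ) (hp : 1 ≤ p) (hc : 1 ≤ c) :
    ∃ (WQ WK : Matrix ((Fin p ⊕ Fin p) ⊕ Fin 2) (Fin (2 * p + 1)) ℝ)
      (WV : Matrix ((Fin p ⊕ Fin p) ⊕ Fin 2) (Fin 1) ℝ),
      ∀ (C : Fin c → Finset (Lit p)), (∀ i, Consistent (C i)) →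
        (∀ i, (C i).card ≤ 3) →
      ∀ (A : Finset (Lit p)), Consistent A →
        satAttn WQ WK WV (Xenc C A) (Fin.last (c + 1))
          = fun _ => if ∀ i, (C i ∩ A).Nonempty then (1 : ℝ) else 0 := by
  refine ⟨WQm p, WKm p, WVm p, ?_⟩
  intro C _ _ A _
  funext v
  simp only [satAttn]
  have hfil : (Finset.univ.filter (fun k : Fin (c + 2) => k ≤ Fin.last (c + 1)))
      = Finset.univ := Finset.filter_true_of_mem (fun k _ => Fin.le_last k)
  simp only [score_last C A, hfil, Xenc_val C A, Fin.le_last, true_and, Finset.filter_true]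
  by_cases hsat : ∀ i, (C i ∩ A).Nonempty
  · rw [if_pos hsat]
    have hAne : A.Nonempty := by
      obtain ⟨l, hl⟩ := hsat ⟨0, hc⟩
      exact ⟨l, (Finset.mem_inter.1 hl).2⟩
    have hle1 : ∀ j : Fin (c + 2), j ≠ 0 → Sc C A j ≤ -1 := by
      intro j hj
      have hj' : (j : ℕ) ≠ 0 := fun h => hj (Fin.ext h)
      rw [Sc, dif_neg hj']
      split_ifs with h1
      · have : 0 < (A ∩ C ⟨(j : ℕ) - 1, by omega⟩).card := by
          rw [Finset.card_pos, Finset.inter_comm]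
          exact hsat _
        have : (1 : ℝ) ≤ ((A ∩ C ⟨(j : ℕ) - 1, by omega⟩).card : ℝ) := by
          exact_mod_cast this
        linarith
      · have : 0 < A.card := Finset.card_pos.2 hAne
        have : (1 : ℝ) ≤ (A.card : ℝ) := by exact_mod_cast this
        linarith
    have hsup : (Finset.univ : Finset (Fin (c + 2))).sup'
        ⟨Fin.last (c + 1), by simp⟩ (fun k => Sc C A k) = -(1/2) := by
      apply le_antisymm
      · apply Finset.sup'_le
        intro b _
        by_cases hb : b = 0
        · rw [hb, Sc_zero]
        · linarith [hle1 b hb]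
      · have := Finset.le_sup' (fun k => Sc C A k) (Finset.mem_univ (0 : Fin (c + 2)))
        rwa [Sc_zero] at this
    rw [hsup]
    have hM : (Finset.univ.filter (fun j : Fin (c + 2) => Sc C A j = -(1/2)))
        = {0} := by
      ext j
      simp only [Finset.mem_filter, Finset.mem_univ, true_and, Finset.mem_singleton]
      constructor
      · intro h
        by_contra hj
        linarith [hle1 j hj]
      · intro h; rw [h, Sc_zero]
    rw [hM, Finset.sum_singleton, Finset.card_singleton]
    norm_num
  · rw [if_neg hsat]
    push_neg at hsat
    obtain ⟨i0, hi0⟩ := hsat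
    have hi0 : C i0 ∩ A = ∅ := hi0
    have hj0 : Sc C A ⟨(i0 : ℕ) + 1, by omega⟩ = 0 := by
      have h0 : ((⟨(i0 : ℕ) + 1, by omega⟩ : Fin (c + 2)) : ℕ) ≠ 0 := by simp
      have h1 : ((⟨(i0 : ℕ) + 1, by omega⟩ : Fin (c + 2)) : ℕ) ≤ c := by
        have := i0.2; simp
      rw [Sc, dif_neg h0, dif_pos h1]
      have : (⟨(i0 : ℕ) + 1 - 1, by omega⟩ : Fin c) = i0 := by
        apply Fin.ext; simp
      rw [this, Finset.inter_comm, hi0]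
      simp
    have hsup : (Finset.univ : Finset (Fin (c + 2))).sup'
        ⟨Fin.last (c + 1), by simp⟩ (fun k => Sc C A k) = 0 := by
      apply le_antisymm
      · exact Finset.sup'_le _ _ (fun b _ => Sc_le_zero C A b)
      · have := Finset.le_sup' (fun k => Sc C A k)
          (Finset.mem_univ (⟨(i0 : ℕ) + 1, by omega⟩ : Fin (c + 2)))
        rwa [hj0] at this
    rw [hsup]
    rw [Finset.sum_eq_zero, zero_div]
    intro j hj
    simp only [Finset.mem_filter, Finset.mem_univ, true_and] at hj
    have hj0' : (j : ℕ) ≠ 0 := by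
      intro h
      have : j = 0 := Fin.ext h
      rw [this, Sc_zero] at hj
      norm_num at hj
    rw [if_neg hj0']
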